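/- arXiv:2111.12436 — 3 statements merged into one kernel-verified Lean document; each statement's English description precedes it below -/
import Mathlib

section
/- Let P₁, …, P_d be pairwise disjoint subsets of 𝔽₂^d whose transversals are linearly independent, and let R = 𝔽₂^d \ ⋃ᵢ Pᵢ. Then the number of pairs (a,b) with a ∈ Pᵢ, b ∈ Pⱼ, i < j, and a + b ∈ R is at most 2·(maxᵢ |Pᵢ|)·|R|. -/
/-!
For `r ∈ R` call `a` a lower end for `r` if `a ∈ P i` and `a + r ∈ P j` with `i < j`. A counted
pair `(a, b)` is determined by `r = a + b` and its lower end `a`, so it suffices to bound the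
lower ends for each `r` by `2 · maxᵢ |Pᵢ|`. Two edges `{a, a + r}` between parts `i, j` and
`{b, b + r}` between parts `k, l` must share a part, for otherwise `a, a + r, b, b + r` is a
transversal summing to `0` over `𝔽₂`. Hence, fixing one edge between parts `i₀, j₀`, every edge
has an endpoint in `P i₀ ∪ P j₀`, and sending a lower end to that endpoint is injective because
`a` and `a + r` are never both lower ends.
-/

open Finset

open scoped Classical in
/-- A partition-matroid reduction of the complete binary matroid `B_d` on `𝔽₂^d`:
pairwise disjoint parts `P i ⊆ 𝔽₂^d` such that every transversal (a set picking at
most one element from each part) is linearly independent over `𝔽₂`. -/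
def TransversalIndep {d : ℕ} (P : Fin d → Finset (Fin d → ZMod 2)) : Prop :=
  Pairwise (fun i j => Disjoint (P i) (P j)) ∧
  ∀ S : Finset (Fin d → ZMod 2),
    (∀ x ∈ S, ∃ i, x ∈ P i) → (∀ i, (S ∩ P i).card ≤ 1) →
    LinearIndependent (ZMod 2) (fun x : {x : Fin d → ZMod 2 // x ∈ S} => (x : Fin d → ZMod 2))

section

variable {d : ℕ}

open scoped Classical in
def lowerEnds (P : Fin d → Finset (Fin d → ZMod 2)) (r : Fin d → ZMod 2) :
    Finset (Fin d → ZMod 2) :=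
  {a | ∃ i j, i < j ∧ a ∈ P i ∧ a + r ∈ P j}

lemma mem_lowerEnds {P : Fin d → Finset (Fin d → ZMod 2)} {r a : Fin d → ZMod 2} :
    a ∈ lowerEnds P r ↔ ∃ i j, i < j ∧ a ∈ P i ∧ a + r ∈ P j := by
  simp [lowerEnds]

open scoped Classical in
lemma card_crossPairs_le_sum_card_lowerEnds (P : Fin d → Finset (Fin d → ZMod 2))
    (R : Finset (Fin d → ZMod 2)) :
    ((Finset.univ ×ˢ Finset.univ).filter (fun p : (Fin d → ZMod 2) × (Fin d → ZMod 2) =>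
        ∃ i j : Fin d, i < j ∧ p.1 ∈ P i ∧ p.2 ∈ P j ∧ p.1 + p.2 ∈ R)).card
      ≤ ∑ r ∈ R, #(lowerEnds P r) := by
  rw [card_eq_sum_card_fiberwise (f := fun p => p.1 + p.2) (t := R)]
  · refine sum_le_sum fun r _ => card_le_card_of_injOn Prod.fst ?_ ?_
    · rintro ⟨a, b⟩ hab
      simp only [mem_coe, mem_filter] at hab
      obtain ⟨⟨-, i, j, hij, ha, hb, -⟩, rfl⟩ := hab
      refine mem_lowerEnds.mpr ⟨i, j, hij, ha, ?_⟩
      rwa [← add_assoc, ZModModule.add_self, zero_add]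
    · rintro ⟨a, b⟩ hab ⟨a', b'⟩ hab' (rfl : a = a')
      simp only [mem_coe, mem_filter] at hab hab'
      simp only [Prod.mk.injEq, true_and]
      exact add_left_cancel (hab.2.trans hab'.2.symm)
  · intro p hp
    obtain ⟨-, -, -, -, -, -, hR⟩ := mem_filter.mp hp
    exact hR

end

namespace TransversalIndep

variable {d : ℕ} {P : Fin d → Finset (Fin d → ZMod 2)}

lemma eq_of_mem_of_mem (h : TransversalIndep P) {x : Fin d → ZMod 2} {i j : Fin d}
    (hi : x ∈ P i) (hj : x ∈ P j) : i = j := by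
  by_contra hij
  exact disjoint_left.mp (h.1 hij) hi hj

lemma linearIndependent (h : TransversalIndep P) {ι : Type*} {v : ι → Fin d → ZMod 2}
    {p : ι → Fin d} (hp : Function.Injective p) (hv : ∀ k, v k ∈ P (p k)) :
    LinearIndependent (ZMod 2) v := by
  classical
  have hv_inj : Function.Injective v := fun k k' hkk' =>
    hp (h.eq_of_mem_of_mem (hv k) (hkk' ▸ hv k'))
  set S : Finset (Fin d → ZMod 2) := {x | ∃ k, v k = x}
  have hS_parts : ∀ x ∈ S, ∃ i, x ∈ P i := by
    simp only [S, mem_filter, mem_univ, true_and]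
    rintro _ ⟨k, rfl⟩
    exact ⟨p k, hv k⟩
  have hS_transversal : ∀ i, #(S ∩ P i) ≤ 1 := by
    refine fun i => card_le_one.mpr ?_
    simp only [S, mem_inter, mem_filter, mem_univ, true_and]
    rintro _ ⟨⟨k, rfl⟩, hk⟩ _ ⟨⟨k', rfl⟩, hk'⟩
    rw [hp ((h.eq_of_mem_of_mem (hv k) hk).trans (h.eq_of_mem_of_mem (hv k') hk').symm)]
  exact (h.2 S hS_parts hS_transversal).comp (fun k => ⟨v k, by simp [S]⟩)
    fun k k' hkk' => hv_inj (congrArg Subtype.val hkk')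

lemma parts_meet_of_add_mem (h : TransversalIndep P) {a b r : Fin d → ZMod 2}
    {i j k l : Fin d} (hij : i ≠ j) (hkl : k ≠ l) (ha : a ∈ P i) (har : a + r ∈ P j)
    (hb : b ∈ P k) (hbr : b + r ∈ P l) : i = k ∨ i = l ∨ j = k ∨ j = l := by
  by_contra! ⟨hik, hil, hjk, hjl⟩
  have hinj : Function.Injective ![i, j, k, l] := by
    simp [Function.Injective, Fin.forall_fin_succ, hij, hik, hil, hjk, hjl, hkl, hij.symm,
      hik.symm, hil.symm, hjk.symm, hjl.symm, hkl.symm]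
  have hindep := h.linearIndependent (v := ![a, a + r, b, b + r]) hinj
    (by simp [Fin.forall_fin_succ, ha, har, hb, hbr])
  have hsum : ∑ n, (1 : ZMod 2) • ![a, a + r, b, b + r] n = 0 := by
    calc ∑ n, (1 : ZMod 2) • ![a, a + r, b, b + r] n = (a + a) + (b + b) + (r + r) := by
          simp only [one_smul, Fin.sum_univ_four, Matrix.cons_val, Fin.isValue]
          abel
      _ = 0 := by simp [ZModModule.add_self]
  exact one_ne_zero (Fintype.linearIndependent_iff.mp hindep _ hsum 0)

lemma add_notMem_lowerEnds (h : TransversalIndep P) {r a : Fin d → ZMod 2}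
    (ha : a ∈ lowerEnds P r) : a + r ∉ lowerEnds P r := by
  rw [mem_lowerEnds] at ha ⊢
  rintro ⟨k, l, hkl, hk, hl⟩
  obtain ⟨i, j, hij, hi, hj⟩ := ha
  rw [add_assoc, ZModModule.add_self, add_zero] at hl
  have hjk := h.eq_of_mem_of_mem hj hk
  have hil := h.eq_of_mem_of_mem hi hl
  subst hjk hil
  exact lt_asymm hij hkl

lemma card_lowerEnds_le (h : TransversalIndep P) (r : Fin d → ZMod 2) :
    #(lowerEnds P r) ≤ 2 * univ.sup fun i => #(P i) := by
  obtain hempty | ⟨a₀, ha₀⟩ := (lowerEnds P r).eq_empty_or_nonempty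
  · simp [hempty]
  obtain ⟨i₀, j₀, hij₀, ha₀i, ha₀j⟩ := mem_lowerEnds.mp ha₀
  set U := P i₀ ∪ P j₀
  have hend : ∀ a ∈ lowerEnds P r, a ∈ U ∨ a + r ∈ U := by
    intro a ha
    obtain ⟨i, j, hij, hi, hj⟩ := mem_lowerEnds.mp ha
    rcases h.parts_meet_of_add_mem hij.ne hij₀.ne hi hj ha₀i ha₀j with rfl | rfl | rfl | rfl
    · exact .inl (mem_union_left _ hi)
    · exact .inl (mem_union_right _ hi)
    · exact .inr (mem_union_left _ hj)
    · exact .inr (mem_union_right _ hj)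
  let f a := if a ∈ U then a else a + r
  have hf : ∀ a, f a = a ∨ f a = a + r := fun a => by
    by_cases ha : a ∈ U <;> simp [f, ha]
  have hf_maps : Set.MapsTo f (lowerEnds P r) U := fun a ha => by
    by_cases haU : a ∈ U
    · simp [f, haU]
    · simpa [f, haU] using (hend a ha).resolve_left haU
  have hf_inj : Set.InjOn f (lowerEnds P r) := fun a ha b hb hab => by
    rcases hf a with hfa | hfa <;> rcases hf b with hfb | hfb <;> rw [hfa, hfb] at hab
    · exact hab
    · exact (h.add_notMem_lowerEnds hb (hab ▸ ha)).elim
    · exact (h.add_notMem_lowerEnds ha (hab ▸ hb)).elim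
    · exact add_right_cancel hab
  calc #(lowerEnds P r) ≤ #U := card_le_card_of_injOn f hf_maps hf_inj
    _ ≤ #(P i₀) + #(P j₀) := card_union_le _ _
    _ ≤ 2 * univ.sup fun i => #(P i) := by
      rw [two_mul]
      gcongr <;> exact le_sup (f := fun i => #(P i)) (mem_univ _)

end TransversalIndep

open scoped Classical in
theorem stmt1_general {d : ℕ} (P : Fin d → Finset (Fin d → ZMod 2)) (h : TransversalIndep P)
    (R : Finset (Fin d → ZMod 2)) :
    ((Finset.univ ×ˢ Finset.univ).filter (fun p : (Fin d → ZMod 2) × (Fin d → ZMod 2) =>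
        ∃ i j : Fin d, i < j ∧ p.1 ∈ P i ∧ p.2 ∈ P j ∧ p.1 + p.2 ∈ R)).card
      ≤ 2 * (Finset.univ.sup fun i => (P i).card) * R.card :=
  calc _ ≤ ∑ r ∈ R, #(lowerEnds P r) :=
        card_crossPairs_le_sum_card_lowerEnds P R
    _ ≤ ∑ _r ∈ R, 2 * (Finset.univ.sup fun i => (P i).card) :=
        sum_le_sum fun r _ => h.card_lowerEnds_le r
    _ = 2 * (Finset.univ.sup fun i => (P i).card) * R.card := by
        rw [sum_const, smul_eq_mul, mul_comm]

open scoped Classical in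
theorem stmt1 {d : ℕ} (P : Fin d → Finset (Fin d → ZMod 2)) (h : TransversalIndep P)
    (R : Finset (Fin d → ZMod 2)) (hR : R = Finset.univ.filter (fun x => ∀ i, x ∉ P i)) :
    ((Finset.univ ×ˢ Finset.univ).filter (fun p : (Fin d → ZMod 2) × (Fin d → ZMod 2) =>
        ∃ i j : Fin d, i < j ∧ p.1 ∈ P i ∧ p.2 ∈ P j ∧ p.1 + p.2 ∈ R)).card
      ≤ 2 * (Finset.univ.sup fun i => (P i).card) * R.card :=
  stmt1_general P h R
end

section
/- Let P₁,…,P_d be pairwise disjoint subsets of 𝔽₂^d whose transversals are linearly independent over 𝔽₂, with total size n = ∑ᵢ |Pᵢ| = c·2^d for some 0 < c ≤ 1. Then some part Pᵢ satisfies |Pᵢ| > (c/8)·n. -/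
/-!
Count the ordered pairs `(x, y)` of elements lying in two different parts. Four elements from
four distinct parts form a transversal, so `x + y = u + w` forces the pairs of parts to meet.
Hence, fixing one cross pair with sum `z` from parts `a, b`, every cross pair with sum `z` has
`x ∈ P a ∪ P b ∪ (z - P a) ∪ (z - P b)`, and `y = z - x`: at most `4M` pairs per sum, where
`M` is the largest part size. So `n² - M n ≤ 4 M 2^d = 4 M n / c`, i.e. `c n ≤ (4 + c) M ≤ 5 M`.
-/

open Finset

section CrossSums

variable {G ι : Type*}

def CrossSumsShareParts [Add G] (P : ι → Finset G) : Prop :=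
  ∀ ⦃i j k l : ι⦄ ⦃x y u w : G⦄, i ≠ j → k ≠ l → x ∈ P i → y ∈ P j → u ∈ P k → w ∈ P l →
    x + y = u + w → i = k ∨ i = l ∨ j = k ∨ j = l

variable [DecidableEq G] [Fintype ι]

def crossPairs (P : ι → Finset G) : Finset (G × G) :=
  (univ.biUnion P ×ˢ univ.biUnion P).filter fun q => ∀ i, ¬ (q.1 ∈ P i ∧ q.2 ∈ P i)

variable {P : ι → Finset G} {M : ℕ}

theorem exists_ne_of_mem_crossPairs {q : G × G} (hq : q ∈ crossPairs P) :
    ∃ i j, i ≠ j ∧ q.1 ∈ P i ∧ q.2 ∈ P j := by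
  simp only [crossPairs, mem_filter, mem_product, mem_biUnion, mem_univ, true_and] at hq
  obtain ⟨⟨⟨i, hi⟩, j, hj⟩, hcross⟩ := hq
  exact ⟨i, j, fun hij => hcross i ⟨hi, hij ▸ hj⟩, hi, hj⟩

theorem sq_sum_card_le_card_crossPairs_add (hdisj : Pairwise (fun i j => Disjoint (P i) (P j)))
    (hM : ∀ i, (P i).card ≤ M) :
    (∑ i, (P i).card) ^ 2 ≤ (crossPairs P).card + M * ∑ i, (P i).card := by
  have hU : (univ.biUnion P).card = ∑ i, (P i).card :=
    card_biUnion fun i _ j _ hij => hdisj hij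
  have hsame : ((univ.biUnion P ×ˢ univ.biUnion P).filter
      fun q => ¬ ∀ i, ¬ (q.1 ∈ P i ∧ q.2 ∈ P i)) ⊆ univ.biUnion fun i => P i ×ˢ P i := by
    intro q hq
    simpa only [mem_biUnion, mem_univ, true_and, mem_product, not_forall, not_not]
      using (mem_filter.mp hq).2
  calc (∑ i, (P i).card) ^ 2
      = (crossPairs P).card + ((univ.biUnion P ×ˢ univ.biUnion P).filter
          fun q => ¬ ∀ i, ¬ (q.1 ∈ P i ∧ q.2 ∈ P i)).card := by
        rw [crossPairs, card_filter_add_card_filter_not, card_product, hU, sq]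
    _ ≤ (crossPairs P).card + ∑ i, (P i).card * (P i).card := by
        gcongr
        exact (card_le_card hsame).trans (card_biUnion_le.trans_eq (by simp only [card_product]))
    _ ≤ (crossPairs P).card + M * ∑ i, (P i).card := by
        rw [mul_sum]
        gcongr with i
        exact hM i

variable [AddCommGroup G]

theorem card_crossPairs_filter_add_eq_le (hP : CrossSumsShareParts P)
    (hM : ∀ i, (P i).card ≤ M) (z : G) :
    ((crossPairs P).filter fun q => q.1 + q.2 = z).card ≤ 4 * M := by
  set F := (crossPairs P).filter fun q => q.1 + q.2 = z
  rcases F.eq_empty_or_nonempty with hF | ⟨q₀, hq₀⟩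
  · simp [hF]
  obtain ⟨hq₀, hz₀⟩ := mem_filter.mp hq₀
  obtain ⟨a, b, hab, ha, hb⟩ := exists_ne_of_mem_crossPairs hq₀
  set A := P a ∪ P b ∪ (P a).image (z - ·) ∪ (P b).image (z - ·)
  have hA : A.card ≤ 4 * M := by
    have := card_union_le (P a ∪ P b ∪ (P a).image (z - ·)) ((P b).image (z - ·))
    have := card_union_le (P a ∪ P b) ((P a).image (z - ·))
    have := card_union_le (P a) (P b)
    have := card_image_le (s := P a) (f := (z - ·))
    have := card_image_le (s := P b) (f := (z - ·))
    have := hM a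
    have := hM b
    simp only [A]
    omega
  refine (card_le_card_of_injOn Prod.fst (fun q hq => ?_) fun q hq q' hq' hfst => ?_).trans hA
  · obtain ⟨hq, hz⟩ := mem_filter.mp hq
    obtain ⟨i, j, hij, hi, hj⟩ := exists_ne_of_mem_crossPairs hq
    have hx : z - q.2 = q.1 := by rw [← hz]; abel
    have : i = a ∨ i = b ∨ j = a ∨ j = b := hP hij hab hi hj ha hb (hz.trans hz₀.symm)
    simp only [A, coe_union, coe_image, Set.mem_union, mem_coe, Set.mem_image]
    rcases this with rfl | rfl | rfl | rfl
    exacts [.inl (.inl (.inl hi)), .inl (.inl (.inr hi)), .inl (.inr ⟨_, hj, hx⟩), .inr ⟨_, hj, hx⟩]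
  · have hz := (mem_filter.mp hq).2
    have hz' := (mem_filter.mp hq').2
    exact Prod.ext hfst (add_left_cancel (hz.trans (hfst ▸ hz'.symm)))

theorem card_crossPairs_le [Fintype G] (hP : CrossSumsShareParts P)
    (hM : ∀ i, (P i).card ≤ M) : (crossPairs P).card ≤ 4 * M * Fintype.card G := by
  refine (card_le_mul_card_image _ _ fun z _ => card_crossPairs_filter_add_eq_le hP hM z).trans ?_
  exact Nat.mul_le_mul_left _ (card_le_univ _)

theorem sq_sum_card_le [Fintype G] (hdisj : Pairwise (fun i j => Disjoint (P i) (P j)))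
    (hP : CrossSumsShareParts P) (hM : ∀ i, (P i).card ≤ M) :
    (∑ i, (P i).card) ^ 2 ≤ 4 * M * Fintype.card G + M * ∑ i, (P i).card :=
  (sq_sum_card_le_card_crossPairs_add hdisj hM).trans (by gcongr; exact card_crossPairs_le hP hM)

end CrossSums

section Transversal

variable {d : ℕ} {P : Fin d → Finset (Fin d → ZMod 2)}

theorem TransversalIndep.linearIndependent_s4 {κ : Type*} [Fintype κ] (h : TransversalIndep P)
    {p : κ → Fin d} (hp : Function.Injective p) {f : κ → Fin d → ZMod 2}
    (hf : ∀ t, f t ∈ P (p t)) : LinearIndependent (ZMod 2) f := by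
  classical
  have hpart : ∀ {t i}, f t ∈ P i → p t = i := fun {t _} hti =>
    by_contra fun hne => disjoint_left.mp (h.1 hne) (hf t) hti
  have hinj : Function.Injective f := fun t s hts => hp (hpart (hts ▸ hf s))
  set S := univ.image f
  have hS : ∀ i, (S ∩ P i).card ≤ 1 := by
    refine fun i => card_le_one.mpr fun a ha b hb => ?_
    simp only [S, mem_inter, mem_image, mem_univ, true_and] at ha hb
    obtain ⟨⟨t, rfl⟩, ht⟩ := ha
    obtain ⟨⟨s, rfl⟩, hs⟩ := hb
    exact congrArg f (hp ((hpart ht).trans (hpart hs).symm))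
  have := h.2 S (by simpa [S] using fun t => ⟨p t, hf t⟩) hS
  exact this.comp (fun t => ⟨f t, mem_image_of_mem f (mem_univ t)⟩)
    fun t s hts => hinj (congrArg Subtype.val hts)

theorem TransversalIndep.crossSumsShareParts (h : TransversalIndep P) :
    CrossSumsShareParts P := by
  intro i j k l x y u w hij hkl hx hy hu hw hsum
  by_contra! hne
  obtain ⟨hik, hil, hjk, hjl⟩ := hne
  have hp : Function.Injective ![i, j, k, l] := by
    intro a b hab
    fin_cases a <;> fin_cases b <;> simp_all [eq_comm]
  have hli := h.linearIndependent_s4 hp (f := ![x, y, u, w]) (fun t => by fin_cases t <;> assumption)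
  have := Fintype.linearIndependent_iff.mp hli ![1, 1, -1, -1]
    (by simp [Fin.sum_univ_four, hsum, add_assoc (u + w), ZModModule.add_self]) 0
  simp at this

end Transversal

theorem div_eight_mul_lt_of_sq_le {n N M c : ℝ} (hn : 0 < n) (hc : 0 < c) (hc1 : c ≤ 1)
    (hM : 0 ≤ M) (hcN : n = c * N) (h : n ^ 2 ≤ 4 * M * N + M * n) : c / 8 * n < M := by
  have hscaled : c * n * n ≤ (4 * M + c * M) * n := by
    calc c * n * n = c * n ^ 2 := by ring
      _ ≤ c * (4 * M * N + M * n) := mul_le_mul_of_nonneg_left h hc.le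
      _ = (4 * M + c * M) * n := by rw [hcN]; ring
  have hcM : c * M ≤ M := mul_le_of_le_one_left hM hc1
  have := le_of_mul_le_mul_right hscaled hn
  nlinarith [mul_pos hc hn]

theorem stmt4 {d : ℕ} (P : Fin d → Finset (Fin d → ZMod 2)) (h : TransversalIndep P)
    (n : ℕ) (c : ℝ) (hn : n = ∑ i, (P i).card)
    (hc : 0 < c) (hc1 : c ≤ 1) (hcn : (n : ℝ) = c * 2 ^ d) :
    ∃ i, ((P i).card : ℝ) > (c / 8) * n := by
  have hn0 : (0 : ℝ) < n := hcn ▸ by positivity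
  have hd : (univ : Finset (Fin d)).Nonempty :=
    nonempty_of_sum_ne_zero (hn ▸ Nat.cast_pos.mp hn0).ne'
  obtain ⟨i, -, hmax⟩ := exists_max_image univ (fun i => (P i).card) hd
  have hcount : n ^ 2 ≤ 4 * (P i).card * 2 ^ d + (P i).card * n := by
    simpa [Fintype.card_fun, ← hn] using
      sq_sum_card_le h.1 h.crossSumsShareParts fun j => hmax j (mem_univ j)
  exact ⟨i, div_eight_mul_lt_of_sq_le hn0 hc hc1 (Nat.cast_nonneg _) hcn (by exact_mod_cast hcount)⟩
end

section
/- Let P₁,…,P_d be pairwise disjoint subsets of 𝔽₂^d whose transversals are linearly independent over 𝔽₂ and with maxᵢ |Pᵢ| ≤ cn/8, where n = ∑ᵢ|Pᵢ| = c·2^d. Construct a directed graph on ⋃ᵢPᵢ with an edge (a,b) for each cross-part pair a ∈ Pᵢ, b ∈ Pⱼ (i ≠ j) with a+b ∈ Pᵢ ∪ Pⱼ, directed toward the element in the part containing a+b. Then every vertex has in-degree at most maxᵢ|Pᵢ|, so the number of such pairs is at most n·maxᵢ|Pᵢ|. -/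
/-!
Direct each cross pair `(a, b)` towards the endpoint `v` whose part `P k` also contains `a + b`.
The edges entering `v` are then mapped injectively into `P k` by `(a, b) ↦ a + b`: two edges with
the same head and the same sum share their other endpoint too, unless `v` is the first coordinate
of one and the second of the other; but then that other endpoint would lie in a part both above
and below `k`. Summing in-degrees over the `n` vertices gives the edge bound.
-/

open Finset

open Function

section CrossPairs

variable {V ι : Type*} {P : ι → Finset V}

lemma index_eq_of_mem_of_mem (hP : Pairwise (Disjoint on P)) {x : V} {a b : ι}
    (ha : x ∈ P a) (hb : x ∈ P b) : a = b := by
  by_contra hne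
  exact disjoint_left.mp (hP hne) ha hb

variable [AddCancelCommMonoid V]

variable (P) in
def IsHead (v : V) (p : V × V) : Prop :=
  (p.1 = v ∧ ∃ i, p.1 ∈ P i ∧ p.1 + p.2 ∈ P i) ∨ (p.2 = v ∧ ∃ j, p.2 ∈ P j ∧ p.1 + p.2 ∈ P j)

lemma IsHead.exists_mem {v : V} {p : V × V} (h : IsHead P v p) : ∃ k, v ∈ P k := by
  obtain ⟨rfl, i, hi, -⟩ | ⟨rfl, j, hj, -⟩ := h
  exacts [⟨i, hi⟩, ⟨j, hj⟩]

lemma IsHead.add_mem (hP : Pairwise (Disjoint on P)) {v : V} {k : ι} (hv : v ∈ P k)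
    {p : V × V} (h : IsHead P v p) : p.1 + p.2 ∈ P k := by
  obtain ⟨rfl, i, hi, hs⟩ | ⟨rfl, j, hj, hs⟩ := h
  · exact index_eq_of_mem_of_mem hP hi hv ▸ hs
  · exact index_eq_of_mem_of_mem hP hj hv ▸ hs

variable [LinearOrder ι]

variable (P) in
def IsCrossPair (p : V × V) : Prop :=
  ∃ i j, i < j ∧ p.1 ∈ P i ∧ p.2 ∈ P j ∧ (p.1 + p.2 ∈ P i ∨ p.1 + p.2 ∈ P j)

lemma IsCrossPair.isHead_fst_or_isHead_snd {p : V × V} (hp : IsCrossPair P p) :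
    IsHead P p.1 p ∨ IsHead P p.2 p := by
  obtain ⟨i, j, -, hi, hj, hs | hs⟩ := hp
  · exact .inl (.inl ⟨rfl, i, hi, hs⟩)
  · exact .inr (.inr ⟨rfl, j, hj, hs⟩)

lemma IsCrossPair.add_ne_add (hP : Pairwise (Disjoint on P)) {v : V} {k : ι} (hv : v ∈ P k)
    {p q : V × V} (hp : IsCrossPair P p) (hq : IsCrossPair P q) (hp1 : p.1 = v) (hq2 : q.2 = v) :
    p.1 + p.2 ≠ q.1 + q.2 := by
  intro heq
  obtain ⟨i, j, hij, hpi, hpj, -⟩ := hp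
  obtain ⟨a, b, hab, hqa, hqb, -⟩ := hq
  have hpq : p.2 = q.1 := by
    rw [hp1, hq2, add_comm q.1] at heq
    exact add_left_cancel heq
  obtain rfl := index_eq_of_mem_of_mem hP (hp1 ▸ hpi) hv
  obtain rfl := index_eq_of_mem_of_mem hP (hq2 ▸ hqb) hv
  obtain rfl := index_eq_of_mem_of_mem hP hpj (hpq ▸ hqa)
  exact lt_asymm hij hab

lemma injOn_add_of_isHead (hP : Pairwise (Disjoint on P)) {v : V} {k : ι} (hv : v ∈ P k) :
    Set.InjOn (fun p : V × V => p.1 + p.2) {p | IsCrossPair P p ∧ IsHead P v p} := by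
  rintro p ⟨hp, hpv⟩ q ⟨hq, hqv⟩ (heq : p.1 + p.2 = q.1 + q.2)
  obtain ⟨hp1, -⟩ | ⟨hp2, -⟩ := hpv <;> obtain ⟨hq1, -⟩ | ⟨hq2, -⟩ := hqv
  · have h1 : p.1 = q.1 := hp1.trans hq1.symm
    rw [h1] at heq
    exact Prod.ext h1 (add_left_cancel heq)
  · exact (hp.add_ne_add hP hv hq hp1 hq2 heq).elim
  · exact (hq.add_ne_add hP hv hp hq1 hp2 heq.symm).elim
  · have h2 : p.2 = q.2 := hp2.trans hq2.symm
    rw [h2] at heq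
    exact Prod.ext (add_right_cancel heq) h2

lemma card_le_sup_card_of_forall_isHead [Fintype ι] (hP : Pairwise (Disjoint on P)) {v : V}
    {s : Finset (V × V)} (hs : ∀ p ∈ s, IsCrossPair P p ∧ IsHead P v p) :
    #s ≤ univ.sup fun i => #(P i) := by
  rcases s.eq_empty_or_nonempty with rfl | ⟨p, hp⟩
  · simp
  obtain ⟨k, hv⟩ := (hs p hp).2.exists_mem
  calc #s ≤ #(P k) :=
        card_le_card_of_injOn _ (fun p hp => (hs p hp).2.add_mem hP hv)
          ((injOn_add_of_isHead hP hv).mono fun p hp => hs p hp)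
    _ ≤ univ.sup fun i => #(P i) := le_sup (f := fun i => #(P i)) (mem_univ k)

lemma card_le_card_biUnion_mul_sup [DecidableEq V] [Fintype ι]
    (hP : Pairwise (Disjoint on P)) {s : Finset (V × V)}
    (hs : ∀ p ∈ s, IsCrossPair P p) : #s ≤ #(univ.biUnion P) * univ.sup fun i => #(P i) := by
  classical
  have hcover : s ⊆ (univ.biUnion P).biUnion fun v => {p ∈ s | IsHead P v p} := by
    intro p hp
    obtain ⟨v, hpv⟩ : ∃ v, IsHead P v p :=
      (hs p hp).isHead_fst_or_isHead_snd.elim (⟨_, ·⟩) (⟨_, ·⟩)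
    obtain ⟨k, hv⟩ := hpv.exists_mem
    exact mem_biUnion.2 ⟨v, mem_biUnion.2 ⟨k, mem_univ k, hv⟩, mem_filter.2 ⟨hp, hpv⟩⟩
  refine (card_le_card hcover).trans (card_biUnion_le_card_mul _ _ _ fun v _ => ?_)
  exact card_le_sup_card_of_forall_isHead hP fun p hp =>
    ⟨hs p (mem_filter.1 hp).1, (mem_filter.1 hp).2⟩

end CrossPairs

open scoped Classical in
theorem stmt12_general {d : ℕ} (P : Fin d → Finset (Fin d → ZMod 2)) (h : TransversalIndep P)
    (n : ℕ) (hn : n = ∑ i, (P i).card) :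
    (∀ v : Fin d → ZMod 2,
      (((Finset.univ ×ˢ Finset.univ).filter
          (fun p : (Fin d → ZMod 2) × (Fin d → ZMod 2) =>
            (∃ i j : Fin d, i < j ∧ p.1 ∈ P i ∧ p.2 ∈ P j ∧
              (p.1 + p.2 ∈ P i ∨ p.1 + p.2 ∈ P j)) ∧
            ((p.1 = v ∧ ∃ i, p.1 ∈ P i ∧ p.1 + p.2 ∈ P i) ∨
             (p.2 = v ∧ ∃ j, p.2 ∈ P j ∧ p.1 + p.2 ∈ P j)))).card
        ≤ Finset.univ.sup fun i => (P i).card))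
    ∧ ((Finset.univ ×ˢ Finset.univ).filter
          (fun p : (Fin d → ZMod 2) × (Fin d → ZMod 2) =>
            ∃ i j : Fin d, i < j ∧ p.1 ∈ P i ∧ p.2 ∈ P j ∧
              (p.1 + p.2 ∈ P i ∨ p.1 + p.2 ∈ P j))).card
        ≤ n * Finset.univ.sup fun i => (P i).card := by
  obtain ⟨hP, -⟩ := h
  refine ⟨fun v => card_le_sup_card_of_forall_isHead hP fun p hp => (mem_filter.1 hp).2, ?_⟩
  have hcard : #(univ.biUnion P) ≤ n := hn ▸ card_biUnion_le
  refine (card_le_card_biUnion_mul_sup hP fun p hp => ?_).trans (Nat.mul_le_mul_right _ hcard)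
  exact (mem_filter.1 hp).2

open scoped Classical in
theorem stmt12 {d : ℕ} (P : Fin d → Finset (Fin d → ZMod 2)) (h : TransversalIndep P)
    (n : ℕ) (c : ℝ) (hn : n = ∑ i, (P i).card) (hc : 0 < c) (hc1 : c ≤ 1)
    (hcn : (n : ℝ) = c * 2 ^ d) (hmax : ∀ i, ((P i).card : ℝ) ≤ c * n / 8) :
    (∀ v : Fin d → ZMod 2,
      (((Finset.univ ×ˢ Finset.univ).filter
          (fun p : (Fin d → ZMod 2) × (Fin d → ZMod 2) =>
            (∃ i j : Fin d, i < j ∧ p.1 ∈ P i ∧ p.2 ∈ P j ∧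
              (p.1 + p.2 ∈ P i ∨ p.1 + p.2 ∈ P j)) ∧
            ((p.1 = v ∧ ∃ i, p.1 ∈ P i ∧ p.1 + p.2 ∈ P i) ∨
             (p.2 = v ∧ ∃ j, p.2 ∈ P j ∧ p.1 + p.2 ∈ P j)))).card
        ≤ Finset.univ.sup fun i => (P i).card))
    ∧ ((Finset.univ ×ˢ Finset.univ).filter
          (fun p : (Fin d → ZMod 2) × (Fin d → ZMod 2) =>
            ∃ i j : Fin d, i < j ∧ p.1 ∈ P i ∧ p.2 ∈ P j ∧
              (p.1 + p.2 ∈ P i ∨ p.1 + p.2 ∈ P j))).card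
        ≤ n * Finset.univ.sup fun i => (P i).card :=
  stmt12_general P h n hn
end
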